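/- Let u be a twice differentiable real-valued function on an interval I ⊂ ℝ satisfying, for all t ∈ I, (1 − u'(t)²)^{k−1} ( u''(t) + ((n−2k)/(2k)) (1 − u'(t)²) ) = (n/(2k)) e^{−2k u(t)}. Then the function t ↦ H(u(t), u'(t)) is constant on I. -/

import Mathlib

open Real Set Filter Topology

/-- The first-integral function H(x,y) = e^{(2k−n)x}(1 − y²)^k − e^{−nx}. -/
noncomputable def Hfun (n k : ℕ) (x y : ℝ) : ℝ :=
  Real.exp ((2 * k - n : ℝ) * x) * (1 - y ^ 2) ^ k - Real.exp (-(n : ℝ) * x)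

/-- If u is twice differentiable on an interval I and satisfies
(1 − u'²)^{k−1}(u'' + ((n−2k)/(2k))(1 − u'²)) = (n/(2k)) e^{−2ku} on I, then
t ↦ H(u(t), u'(t)) is constant on I. -/
theorem first_integral_constant
    {n k : ℕ} (hn : 3 ≤ n) (hk2 : 2 ≤ k) (hkn : k ≤ n)
    (I : Set ℝ) (hI : Convex ℝ I)
    (u u' u'' : ℝ → ℝ)
    (hu' : ∀ t ∈ I, HasDerivWithinAt u (u' t) I t)
    (hu'' : ∀ t ∈ I, HasDerivWithinAt u' (u'' t) I t)
    (hODE : ∀ t ∈ I,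
      (1 - u' t ^ 2) ^ (k - 1) *
          (u'' t + (((n : ℝ) - 2 * k) / (2 * k)) * (1 - u' t ^ 2)) =
        ((n : ℝ) / (2 * k)) * Real.exp (-(2 * k : ℝ) * u t)) :
    ∀ s ∈ I, ∀ t ∈ I, Hfun n k (u s) (u' s) = Hfun n k (u t) (u' t) := by
  have hk0 : (0:ℝ) < 2 * (k:ℝ) := by
    have : (2:ℕ) ≤ k := hk2
    have : (2:ℝ) ≤ (k:ℝ) := by exact_mod_cast this
    linarith
  have key : ∀ t ∈ I, HasDerivWithinAt (fun t => Hfun n k (u t) (u' t)) 0 I t := by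
    intro t ht
    have h1 := hu' t ht
    have h2 := hu'' t ht
    have hode := hODE t ht
    set a := u t with ha
    set b := u' t with hb
    set c := u'' t with hc
    have hA : HasDerivWithinAt (fun t => Real.exp ((2 * (k:ℝ) - n) * u t))
        (Real.exp ((2 * (k:ℝ) - n) * a) * ((2 * (k:ℝ) - n) * b)) I t := by
      have := (h1.const_mul ((2 * (k:ℝ) - n))).exp
      convert this using 1 <;> ring
    have hB : HasDerivWithinAt (fun t => (1 - u' t ^ 2) ^ k)
        ((k:ℝ) * (1 - b ^ 2) ^ (k - 1) * (-(2 * b * c))) I t := by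
      have hinner : HasDerivWithinAt (fun t => 1 - u' t ^ 2) (-(2 * b * c)) I t := by
        have := (h2.pow 2).const_sub 1
        refine this.congr_deriv ?_
        push_cast
        ring
      have := hinner.pow k
      exact this
    have hC : HasDerivWithinAt (fun t => Real.exp (-(n:ℝ) * u t))
        (Real.exp (-(n:ℝ) * a) * (-(n:ℝ) * b)) I t := by
      have := (h1.const_mul (-(n:ℝ))).exp
      convert this using 1 <;> ring
    have hD : HasDerivWithinAt (fun t => Hfun n k (u t) (u' t))
        (Real.exp ((2 * (k:ℝ) - n) * a) * ((2 * (k:ℝ) - n) * b) * (1 - b ^ 2) ^ k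
          + Real.exp ((2 * (k:ℝ) - n) * a) * ((k:ℝ) * (1 - b ^ 2) ^ (k - 1) * (-(2 * b * c)))
          - Real.exp (-(n:ℝ) * a) * (-(n:ℝ) * b)) I t := by
      unfold Hfun
      exact (hA.mul hB).sub hC
    convert hD using 1
    have hP : (1 - b ^ 2) ^ k = (1 - b ^ 2) ^ (k - 1) * (1 - b ^ 2) := by
      rw [← pow_succ]
      congr 1
      omega
    have hE : Real.exp ((2 * (k:ℝ) - n) * a) * Real.exp (-(2 * (k:ℝ) * a))
        = Real.exp (-(n:ℝ) * a) := by
      rw [← Real.exp_add]; ring_nf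
    field_simp at hode
    linear_combination (b * Real.exp ((2 * (k:ℝ) - n) * a)) * hode
      + (((n:ℝ) - 2 * k) * b * Real.exp ((2 * (k:ℝ) - n) * a)) * hP
      + ((n:ℝ) * b) * hE
  intro s hs t ht
  have h := hI.norm_image_sub_le_of_norm_hasDerivWithin_le
    (f' := fun _ => (0:ℝ)) (C := 0) key (fun x hx => by simp) hs ht
  rw [zero_mul] at h
  exact (sub_eq_zero.mp (norm_le_zero_iff.mp h)).symm
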